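/- arXiv:2203.05454 — 2 statements merged into one kernel-verified Lean document; each statement's English description precedes it below -/
import Mathlib

section
/- Let T ∈ M_n(ℂ) satisfy Tr(ρ^{-1} T* T) = δ², where ρ is the (invertible, diagonal) density matrix of a δ-form ψ on M_n(ℂ). Then A(x) := T x T* is a quantum adjacency matrix for (M_n(ℂ), ψ), i.e., m(A⊗A)m* = δ² A. The key identity is: for every S ∈ M_n(ℂ), Σ_{k=1}^n f_{ik} S f_{kj} = Tr(ρ^{-1} S) f_{ij}, where f_{ij} are the adapted matrix units. -/
open scoped TensorProduct
open TensorProduct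

noncomputable section


open scoped TensorProduct
open TensorProduct

noncomputable section

variable {B : Type*} [Ring B] [StarRing B] [Algebra ℂ B] [StarModule ℂ B]
  [Module.Finite ℂ B] [Module.Free ℂ B]

/-- The multiplication map `m : B ⊗ B → B`. -/
abbrev mulMap (B : Type*) [Ring B] [Algebra ℂ B] : B ⊗[ℂ] B →ₗ[ℂ] B := LinearMap.mul' ℂ B

/-- `ψ ⊗ ψ` as a functional on `B ⊗ B`. -/
def psi2 (ψ : B →ₗ[ℂ] ℂ) : B ⊗[ℂ] B →ₗ[ℂ] ℂ :=
  (TensorProduct.lid ℂ ℂ).toLinearMap ∘ₗ TensorProduct.map ψ ψ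

/-- `ψ ⊗ id : B ⊗ B → B`. -/
def psiOne (ψ : B →ₗ[ℂ] ℂ) : B ⊗[ℂ] B →ₗ[ℂ] B :=
  (TensorProduct.lid ℂ B).toLinearMap ∘ₗ TensorProduct.map ψ LinearMap.id

/-- `ψ` is a faithful state. -/
def IsState (ψ : B →ₗ[ℂ] ℂ) : Prop :=
  ψ 1 = 1 ∧ (∀ x : B, 0 ≤ (ψ (star x * x)).re ∧ (ψ (star x * x)).im = 0) ∧
    ∀ x : B, ψ (star x * x) = 0 → x = 0

/-- `mstar` is the adjoint of multiplication w.r.t. the GNS inner products of `ψ`: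
`⟪y ⊗ z, m*(x)⟫_{ψ⊗ψ} = ⟪y * z, x⟫_ψ`. -/
def IsAdjointMul (ψ : B →ₗ[ℂ] ℂ) (mstar : B →ₗ[ℂ] B ⊗[ℂ] B) : Prop :=
  ∀ x y z : B, psi2 ψ ((star y ⊗ₜ[ℂ] star z) * mstar x) = ψ (star (y * z) * x)

/-- `ψ` is a `δ`-form: `m m* = δ² id`. -/
def IsDeltaForm (mstar : B →ₗ[ℂ] B ⊗[ℂ] B) (δ : ℝ) : Prop :=
  ∀ x : B, mulMap B (mstar x) = ((δ : ℂ)^2) • x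

/-- `A` is a quantum adjacency matrix: `m (A ⊗ A) m* = δ² A`. -/
def IsQAdj (mstar : B →ₗ[ℂ] B ⊗[ℂ] B) (δ : ℝ) (A : B →ₗ[ℂ] B) : Prop :=
  ∀ x : B, mulMap B (TensorProduct.map A A (mstar x)) = ((δ : ℂ)^2) • A x

/-- The quantum edge indicator `ε = (1/δ²)(1 ⊗ A) m*(1)`. -/
def edgeInd (mstar : B →ₗ[ℂ] B ⊗[ℂ] B) (δ : ℝ) (A : B →ₗ[ℂ] B) : B ⊗[ℂ] B :=
  (((δ : ℂ)^2)⁻¹) • (LinearMap.lTensor B A) (mstar 1)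

/-- The `#`-multiplication on `B ⊗ B`: `(a⊗b)#(c⊗d) = (ac)⊗(db)` (i.e. `B ⊗ Bᵒᵖ`). -/
def hashMul (ξ η : B ⊗[ℂ] B) : B ⊗[ℂ] B :=
  (TensorProduct.congr (LinearEquiv.refl ℂ B) (MulOpposite.opLinearEquiv ℂ (M := B))).symm
    ((TensorProduct.congr (LinearEquiv.refl ℂ B) (MulOpposite.opLinearEquiv ℂ (M := B))) ξ *
      (TensorProduct.congr (LinearEquiv.refl ℂ B) (MulOpposite.opLinearEquiv ℂ (M := B))) η)

/-- The (conjugate-linear) star operation on `B ⊗ B`, `star (a ⊗ b) = star a ⊗ star b`,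
defined via a choice of basis. -/
def starT (ξ : B ⊗[ℂ] B) : B ⊗[ℂ] B :=
  ∑ p : Module.Free.ChooseBasisIndex ℂ B × Module.Free.ChooseBasisIndex ℂ B,
    (starRingEnd ℂ)
      (((Module.Free.chooseBasis ℂ B).tensorProduct (Module.Free.chooseBasis ℂ B)).repr ξ p) •
      (star ((Module.Free.chooseBasis ℂ B) p.1) ⊗ₜ[ℂ] star ((Module.Free.chooseBasis ℂ B) p.2))

/-- The `B`-valued inner product on `B ⊗ B`: `⟨a⊗b, c⊗d⟩_B = ψ(a*c) b* d`. -/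
def bip (ψ : B →ₗ[ℂ] ℂ) (ξ η : B ⊗[ℂ] B) : B := psiOne ψ (starT ξ * η)

/-- Positivity in a star ring. -/
def IsPosEl {R : Type*} [Ring R] [StarRing R] (x : R) : Prop := ∃ y, x = star y * y

/-- Complete positivity of a linear map on `B`. -/
def IsCP (A : B →ₗ[ℂ] B) : Prop :=
  ∀ (n : ℕ) (M : Matrix (Fin n) (Fin n) B), IsPosEl M → IsPosEl (M.map A)

/-- The map `A_ξ : x ↦ δ² (ψ ⊗ 1)(x · ξ)`. -/
def Axi (ψ : B →ₗ[ℂ] ℂ) (δ : ℝ) (ξ : B ⊗[ℂ] B) : B →ₗ[ℂ] B :=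
  ((δ : ℂ)^2) • ((psiOne ψ) ∘ₗ ((LinearMap.mul ℂ (B ⊗[ℂ] B)).flip ξ) ∘ₗ
    (Algebra.TensorProduct.includeLeft : B →ₐ[ℂ] B ⊗[ℂ] B).toLinearMap)

/-- The quantum edge correspondence `E_G = B · ε_G · B` as a subspace of `B ⊗ B`. -/
def EGspan (mstar : B →ₗ[ℂ] B ⊗[ℂ] B) (δ : ℝ) (A : B →ₗ[ℂ] B) : Submodule ℂ (B ⊗[ℂ] B) :=
  Submodule.span ℂ
    {z : B ⊗[ℂ] B | ∃ x y : B, z = (x ⊗ₜ[ℂ] (1 : B)) * edgeInd mstar δ A * ((1 : B) ⊗ₜ[ℂ] y)}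

/-- The state `x ↦ Tr(ρ x)` on `M_n(ℂ)` with `ρ = diag r`. -/
def psiM {n : ℕ} (r : Fin n → ℝ) : Matrix (Fin n) (Fin n) ℂ →ₗ[ℂ] ℂ where
  toFun x := ∑ i, (r i : ℂ) * x i i
  map_add' x y := by simp [Matrix.add_apply, mul_add, Finset.sum_add_distrib]
  map_smul' c x := by
    simp only [Matrix.smul_apply, smul_eq_mul, RingHom.id_apply]
    rw [Finset.mul_sum]
    congr 1; ext i; ring

/-- Adapted matrix units for `(M_n(ℂ), Tr(ρ ·))`. -/
def fM {n : ℕ} (r : Fin n → ℝ) (i j : Fin n) : Matrix (Fin n) (Fin n) ℂ :=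
  ((Real.sqrt (r i * r j) : ℂ))⁻¹ • Matrix.single i j 1



/-!
With `ψ = Tr(ρ ·)` and `ρ = diag r`, the pairing `(ξ, η) ↦ (ψ ⊗ ψ)(ξ η)` on `M_n ⊗ M_n` is
nondegenerate, so the adjoint of multiplication is determined by its defining identity, and one
checks that `m*(x) = ∑_{a,b} r_b⁻¹ (x e_{ab}) ⊗ e_{ba}`. For `A(x) = T x S` each summand of
`m (A ⊗ A) m*(x)` contains the sandwich `e_{ab} (S T) e_{ba} = (S T)_{bb} e_{aa}`, so summing over
`b` produces the scalar `Tr(ρ⁻¹ S T)` and summing over `a` the identity: the result is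
`Tr(ρ⁻¹ S T) A(x)`, which is `δ² A(x)` for `S = T*`. The matrix-unit identity is the same
sandwich computation, rescaled by the normalisations of the `f_{ij}`.
-/

open Matrix

theorem Matrix.single_eq_smul_single_one {m : Type*} [DecidableEq m] {α : Type*}
    [MulZeroOneClass α] (i j : m) (c : α) : single i j c = c • single i j 1 := by
  rw [smul_single, smul_eq_mul, mul_one]

theorem psi2_tmul {A : Type*} [Ring A] [Algebra ℂ A] (ψ : A →ₗ[ℂ] ℂ) (a b : A) :
    psi2 ψ (a ⊗ₜ[ℂ] b) = ψ a * ψ b := by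
  simp [psi2]

section psiM

variable {n : ℕ} (r : Fin n → ℝ)

theorem psiM_apply (x : Matrix (Fin n) (Fin n) ℂ) : psiM r x = ∑ i, (r i : ℂ) * x i i := rfl

theorem psiM_single_mul (i j : Fin n) (x : Matrix (Fin n) (Fin n) ℂ) :
    psiM r (single i j 1 * x) = r i * x j i := by
  simp [psiM_apply, mul_apply, single, ite_and]

theorem psiM_mul_single (i j : Fin n) (x : Matrix (Fin n) (Fin n) ℂ) :
    psiM r (x * single i j 1) = r j * x j i := by
  simp [psiM_apply, mul_apply, single, ite_and]

theorem psi2_psiM_single_tmul_single_mul (i j k l : Fin n)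
    (ξ : Matrix (Fin n) (Fin n) ℂ ⊗[ℂ] Matrix (Fin n) (Fin n) ℂ) :
    psi2 (psiM r) ((single i j 1 ⊗ₜ[ℂ] single k l 1) * ξ) =
      r i * r k * kroneckerLinearEquiv _ _ _ _ ℂ ξ (j, l) (i, k) := by
  induction ξ using TensorProduct.induction_on with
  | zero => simp
  | tmul x y =>
    simp only [Algebra.TensorProduct.tmul_mul_tmul, psi2_tmul, psiM_single_mul,
      kroneckerLinearEquiv_tmul, kronecker_apply]
    ring
  | add ξ η hξ hη => rw [mul_add, map_add, hξ, hη, map_add, Matrix.add_apply, mul_add]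

theorem eq_zero_of_forall_psi2_psiM_tmul_mul_eq_zero (hr : ∀ i, r i ≠ 0)
    (ξ : Matrix (Fin n) (Fin n) ℂ ⊗[ℂ] Matrix (Fin n) (Fin n) ℂ)
    (h : ∀ y z : Matrix (Fin n) (Fin n) ℂ, psi2 (psiM r) ((y ⊗ₜ[ℂ] z) * ξ) = 0) : ξ = 0 := by
  refine (kroneckerLinearEquiv _ _ _ _ ℂ).map_eq_zero_iff.mp (ext fun p q => ?_)
  have hpq := h (single q.1 p.1 1) (single q.2 p.2 1)
  rw [psi2_psiM_single_tmul_single_mul] at hpq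
  simpa [hr] using hpq

def comulM (x : Matrix (Fin n) (Fin n) ℂ) :
    Matrix (Fin n) (Fin n) ℂ ⊗[ℂ] Matrix (Fin n) (Fin n) ℂ :=
  ∑ a, ∑ b, (((r b)⁻¹ : ℝ) : ℂ) • ((x * single a b 1) ⊗ₜ[ℂ] single b a 1)

theorem psi2_psiM_tmul_mul_comulM (hr : ∀ i, r i ≠ 0) (y z x : Matrix (Fin n) (Fin n) ℂ) :
    psi2 (psiM r) ((y ⊗ₜ[ℂ] z) * comulM r x) = psiM r (z * y * x) := by
  simp only [comulM, Finset.mul_sum, mul_smul_comm, map_sum, map_smul,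
    Algebra.TensorProduct.tmul_mul_tmul, psi2_tmul, ← mul_assoc, psiM_mul_single, smul_eq_mul]
  rw [psiM_apply]
  refine Finset.sum_congr rfl fun a _ => ?_
  rw [mul_assoc z, mul_apply, Finset.mul_sum]
  refine Finset.sum_congr rfl fun b _ => ?_
  have hb : (r b : ℂ) ≠ 0 := mod_cast hr b
  push_cast
  field_simp

theorem IsAdjointMul.eq_comulM (hr : ∀ i, r i ≠ 0)
    {mstar : Matrix (Fin n) (Fin n) ℂ →ₗ[ℂ] Matrix (Fin n) (Fin n) ℂ ⊗[ℂ] Matrix (Fin n) (Fin n) ℂ}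
    (hadj : IsAdjointMul (psiM r) mstar) (x : Matrix (Fin n) (Fin n) ℂ) :
    mstar x = comulM r x := by
  rw [← sub_eq_zero]
  refine eq_zero_of_forall_psi2_psiM_tmul_mul_eq_zero r hr _ fun y z => ?_
  have h := hadj x (star y) (star z)
  rw [star_star, star_star, star_mul, star_star, star_star] at h
  rw [mul_sub, map_sub, h, psi2_psiM_tmul_mul_comulM r hr, sub_self]

theorem mul'_map_comulM (T S x : Matrix (Fin n) (Fin n) ℂ) :
    LinearMap.mul' ℂ _ (TensorProduct.map (LinearMap.mulRight ℂ S ∘ₗ LinearMap.mulLeft ℂ T)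
      (LinearMap.mulRight ℂ S ∘ₗ LinearMap.mulLeft ℂ T) (comulM r x)) =
      (∑ k, (((r k)⁻¹ : ℝ) : ℂ) * (S * T) k k) • (T * x * S) := by
  have sandwich : ∀ a b : Fin n, T * (x * single a b 1) * S * (T * single b a 1 * S) =
      (S * T) b b • (T * x * single a a 1 * S) := fun a b => by
    calc T * (x * single a b 1) * S * (T * single b a 1 * S)
        = T * x * (single a b 1 * (S * T) * single b a 1) * S := by noncomm_ring
      _ = (S * T) b b • (T * x * single a a 1 * S) := by
        rw [single_mul_mul_single, one_mul, mul_one, single_eq_smul_single_one, mul_smul_comm,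
          smul_mul_assoc]
  simp only [comulM, map_sum, map_smul, TensorProduct.map_tmul, LinearMap.comp_apply,
    LinearMap.mulLeft_apply, LinearMap.mulRight_apply, LinearMap.mul'_apply, sandwich, smul_smul]
  rw [Finset.sum_comm, Finset.sum_smul]
  refine Finset.sum_congr rfl fun b _ => ?_
  rw [← Finset.smul_sum, ← Finset.sum_mul, ← Finset.mul_sum, sum_single_one, mul_one]

end psiM

theorem sqrt_mul_sqrt_mul_eq {a b c : ℝ} (ha : 0 ≤ a) (hb : 0 ≤ b) (hc : 0 ≤ c) :
    √(a * b) * √(b * c) = b * √(a * c) := by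
  rw [← Real.sqrt_mul (mul_nonneg ha hb), show a * b * (b * c) = a * c * (b * b) by ring,
    Real.sqrt_mul (mul_nonneg ha hc), Real.sqrt_mul_self hb, mul_comm]

theorem sum_fM_mul_mul_fM {n : ℕ} (r : Fin n → ℝ) (hr : ∀ i, 0 ≤ r i)
    (S : Matrix (Fin n) (Fin n) ℂ) (i j : Fin n) :
    ∑ k, fM r i k * S * fM r k j = (∑ k, (((r k)⁻¹ : ℝ) : ℂ) * S k k) • fM r i j := by
  rw [Finset.sum_smul]
  refine Finset.sum_congr rfl fun k _ => ?_
  have hcoeff : ((√(r i * r k) : ℂ))⁻¹ * ((√(r k * r j) : ℂ))⁻¹ =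
      (((r k)⁻¹ : ℝ) : ℂ) * ((√(r i * r j) : ℂ))⁻¹ := by
    rw [← mul_inv, ← Complex.ofReal_mul, sqrt_mul_sqrt_mul_eq (hr i) (hr k) (hr j)]
    push_cast
    rw [mul_inv]
  simp only [fM, smul_mul_assoc, mul_smul_comm, smul_smul, single_mul_mul_single, one_mul,
    mul_one]
  rw [single_eq_smul_single_one i j (S k k), smul_smul, mul_comm ((√(r k * r j) : ℂ))⁻¹, hcoeff,
    mul_right_comm]

theorem stmt_18_general {n : ℕ} (r : Fin n → ℝ) (hr : ∀ i, 0 < r i)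
    (δ : ℝ)
    (mstar : Matrix (Fin n) (Fin n) ℂ →ₗ[ℂ] Matrix (Fin n) (Fin n) ℂ ⊗[ℂ] Matrix (Fin n) (Fin n) ℂ)
    (hadj : IsAdjointMul (psiM r) mstar)
    (T : Matrix (Fin n) (Fin n) ℂ)
    (hT : ∑ k, (((r k)⁻¹ : ℝ) : ℂ) * (star T * T) k k = ((δ : ℂ))^2) :
    (∀ (S : Matrix (Fin n) (Fin n) ℂ) (i j : Fin n),
      ∑ k, fM r i k * S * fM r k j = (∑ k, (((r k)⁻¹ : ℝ) : ℂ) * S k k) • fM r i j) ∧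
    IsQAdj mstar δ ((LinearMap.mulRight ℂ (star T)) ∘ₗ (LinearMap.mulLeft ℂ T)) := by
  refine ⟨sum_fM_mul_mul_fM r fun i => (hr i).le, fun x => ?_⟩
  rw [hadj.eq_comulM r fun i => (hr i).ne', mul'_map_comulM, hT]
  rfl

/-- If `Tr(ρ⁻¹ T* T) = δ²` then `A(x) = T x T*` is a quantum adjacency matrix on
`(M_n(ℂ), ψ)`; the key identity is `∑ₖ f_{ik} S f_{kj} = Tr(ρ⁻¹ S) f_{ij}`. -/
theorem stmt_18 {n : ℕ} (hn : 0 < n) (r : Fin n → ℝ) (hr : ∀ i, 0 < r i)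
    (δ : ℝ) (hδ : 0 < δ) (htrace : ∑ i, (r i)⁻¹ = δ ^ 2)
    (hstate : IsState (psiM r))
    (mstar : Matrix (Fin n) (Fin n) ℂ →ₗ[ℂ] Matrix (Fin n) (Fin n) ℂ ⊗[ℂ] Matrix (Fin n) (Fin n) ℂ)
    (hadj : IsAdjointMul (psiM r) mstar)
    (hdelta : IsDeltaForm mstar δ)
    (T : Matrix (Fin n) (Fin n) ℂ)
    (hT : ∑ k, (((r k)⁻¹ : ℝ) : ℂ) * (star T * T) k k = ((δ : ℂ))^2) :
    (∀ (S : Matrix (Fin n) (Fin n) ℂ) (i j : Fin n),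
      ∑ k, fM r i k * S * fM r k j = (∑ k, (((r k)⁻¹ : ℝ) : ℂ) * S k k) • fM r i j) ∧
    IsQAdj mstar δ ((LinearMap.mulRight ℂ (star T)) ∘ₗ (LinearMap.mulLeft ℂ T)) :=
  stmt_18_general r hr δ mstar hadj T hT

end
end
end

section
/- Let G = (B,ψ,A) be a quantum graph with δ-form ψ where A = α is a *-automorphism of B. Then the quantum edge correspondence E_α = B·ε_α·B is isomorphic, as a C*-correspondence over B, to B_α, which is B with inner product ⟨a,b⟩ = a*b, right action by multiplication, and left action x·η := α(x)η; the isomorphism sends (1/δ)·1 to ε_α. -/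
/-!
Faithfulness of `ψ` makes the `B`-valued pairing `⟨ξ, η⟩ = (ψ ⊗ id)(ξ* η)` on `B ⊗ B`
nondegenerate, so the adjointness of `m*` upgrades to `⟨ξ, m*(x)⟩ = m(ξ)* x`, and this forces
`m*` to be a bimodule map: `m*(x) = (x ⊗ 1) m*(1) = m*(1) (1 ⊗ x)`. Applying `1 ⊗ α` gives
`(x ⊗ 1) ε_α = ε_α (1 ⊗ α x)`, and the `δ`-form identity `m m* = δ²` gives `⟨ε_α, ε_α⟩ = δ⁻²`.
Hence `b ↦ δ ε_α (1 ⊗ b)` intertwines the actions of `B_α` and `E_α`, is isometric for the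
`B`-valued inner products, and has range `B ε_α B`.
-/

open scoped TensorProduct
open TensorProduct

noncomputable section


open scoped TensorProduct
open TensorProduct

noncomputable section

variable {B : Type*} [Ring B] [StarRing B] [Algebra ℂ B] [StarModule ℂ B]
  [Module.Finite ℂ B] [Module.Free ℂ B]

section Pairing

variable {B : Type*} [Ring B] [Algebra ℂ B] (ψ : B →ₗ[ℂ] ℂ)

@[simp]
lemma psiOne_tmul (u v : B) : psiOne ψ (u ⊗ₜ[ℂ] v) = ψ u • v := by
  simp [psiOne]

@[simp]
lemma psi2_tmul_s19 (u v : B) : psi2 ψ (u ⊗ₜ[ℂ] v) = ψ u * ψ v := by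
  simp [psi2]

lemma psi_psiOne (ζ : B ⊗[ℂ] B) : ψ (psiOne ψ ζ) = psi2 ψ ζ := by
  have : ψ ∘ₗ psiOne ψ = psi2 ψ := TensorProduct.ext' fun u v => by simp
  exact LinearMap.congr_fun this ζ

lemma psiOne_one_tmul_mul (c : B) (ζ : B ⊗[ℂ] B) :
    psiOne ψ (((1 : B) ⊗ₜ[ℂ] c) * ζ) = c * psiOne ψ ζ := by
  induction ζ using TensorProduct.induction_on with
  | zero => simp
  | tmul u v => simp [Algebra.TensorProduct.tmul_mul_tmul]
  | add x y hx hy => simp only [mul_add, map_add, hx, hy]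

lemma psiOne_mul_one_tmul (c : B) (ζ : B ⊗[ℂ] B) :
    psiOne ψ (ζ * ((1 : B) ⊗ₜ[ℂ] c)) = psiOne ψ ζ * c := by
  induction ζ using TensorProduct.induction_on with
  | zero => simp
  | tmul u v => simp [Algebra.TensorProduct.tmul_mul_tmul]
  | add x y hx hy => simp only [add_mul, map_add, hx, hy]

lemma psiOne_lTensor (α : B →ₗ[ℂ] B) (ζ : B ⊗[ℂ] B) :
    psiOne ψ (LinearMap.lTensor B α ζ) = α (psiOne ψ ζ) := by
  have : psiOne ψ ∘ₗ LinearMap.lTensor B α = α ∘ₗ psiOne ψ :=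
    TensorProduct.ext' fun u v => by simp
  exact LinearMap.congr_fun this ζ

lemma mulMap_mul_one_tmul (c : B) (ζ : B ⊗[ℂ] B) :
    mulMap B (ζ * ((1 : B) ⊗ₜ[ℂ] c)) = mulMap B ζ * c := by
  induction ζ using TensorProduct.induction_on with
  | zero => simp
  | tmul u v => simp [Algebra.TensorProduct.tmul_mul_tmul, mul_assoc]
  | add x y hx hy => simp only [add_mul, map_add, hx, hy]

lemma mulMap_tmul_one_mul (c : B) (ζ : B ⊗[ℂ] B) :
    mulMap B ((c ⊗ₜ[ℂ] (1 : B)) * ζ) = c * mulMap B ζ := by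
  induction ζ using TensorProduct.induction_on with
  | zero => simp
  | tmul u v => simp [Algebra.TensorProduct.tmul_mul_tmul, mul_assoc]
  | add x y hx hy => simp only [mul_add, map_add, hx, hy]

lemma lTensor_mul {α : B →ₗ[ℂ] B} (hmul : ∀ x y, α (x * y) = α x * α y) (ζ η : B ⊗[ℂ] B) :
    LinearMap.lTensor B α (ζ * η) = LinearMap.lTensor B α ζ * LinearMap.lTensor B α η := by
  induction ζ using TensorProduct.induction_on with
  | zero => simp
  | tmul u v =>
    induction η using TensorProduct.induction_on with
    | zero => simp
    | tmul u' v' => simp [Algebra.TensorProduct.tmul_mul_tmul, hmul]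
    | add a b ha hb => simp only [mul_add, map_add, ha, hb]
  | add a b ha hb => simp only [add_mul, map_add, ha, hb]

end Pairing

section StarTensor

variable {B : Type*} [Ring B] [StarRing B] [Algebra ℂ B] [StarModule ℂ B]
  [Module.Finite ℂ B] [Module.Free ℂ B]

lemma starT_eq_star (ξ : B ⊗[ℂ] B) : starT ξ = star ξ := by
  let b := Module.Free.chooseBasis ℂ B
  conv_rhs => rw [← (b.tensorProduct b).sum_repr ξ]
  rw [starT, star_sum]
  refine Finset.sum_congr rfl fun p _ => ?_
  rw [star_smul, Module.Basis.tensorProduct_apply, TensorProduct.star_tmul, starRingEnd_apply]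

lemma bip_eq (ψ : B →ₗ[ℂ] ℂ) (ξ η : B ⊗[ℂ] B) : bip ψ ξ η = psiOne ψ (star ξ * η) := by
  rw [bip, starT_eq_star]

end StarTensor

lemma star_lTensor {B : Type*} [Ring B] [StarRing B] [Algebra ℂ B] [StarModule ℂ B]
    {α : B →ₗ[ℂ] B} (hstar : ∀ x, α (star x) = star (α x)) (ζ : B ⊗[ℂ] B) :
    star (LinearMap.lTensor B α ζ) = LinearMap.lTensor B α (star ζ) := by
  induction ζ using TensorProduct.induction_on with
  | zero => simp
  | tmul u v => simp [hstar]
  | add a b ha hb => simp only [map_add, star_add, ha, hb]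

lemma mul_flip_compr₂_injective {B : Type*} [Ring B] [StarRing B] [Algebra ℂ B]
    {ψ : B →ₗ[ℂ] ℂ} (hψ : ∀ x : B, ψ (star x * x) = 0 → x = 0) :
    Function.Injective ((LinearMap.mul ℂ B).flip.compr₂ ψ) := by
  rw [← LinearMap.ker_eq_bot, LinearMap.ker_eq_bot']
  intro c hc
  exact hψ c (LinearMap.congr_fun hc (star c))

/-- Up to `dualDistribEquiv`, the pairing `(ζ, η) ↦ (ψ ⊗ ψ) (ζ * η)` is the tensor square of
the nondegenerate pairing `(a, c) ↦ ψ (a * c)`. -/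
lemma eq_zero_of_forall_psi2_mul_eq_zero {B : Type*} [Ring B] [StarRing B] [Algebra ℂ B]
    [Module.Finite ℂ B] [Module.Free ℂ B]
    {ψ : B →ₗ[ℂ] ℂ} (hψ : ∀ x : B, ψ (star x * x) = 0 → x = 0)
    {η : B ⊗[ℂ] B} (h : ∀ ζ, psi2 ψ (ζ * η) = 0) : η = 0 := by
  let L := (LinearMap.mul ℂ B).flip.compr₂ ψ
  have hpair : (LinearMap.mul ℂ (B ⊗[ℂ] B)).flip.compr₂ (psi2 ψ) =
      (TensorProduct.dualDistribEquiv ℂ B B).toLinearMap ∘ₗ TensorProduct.map L L := by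
    refine TensorProduct.ext' fun c d => TensorProduct.ext' fun a b => ?_
    simp [L, Algebra.TensorProduct.tmul_mul_tmul]
  have hinj : Function.Injective ((LinearMap.mul ℂ (B ⊗[ℂ] B)).flip.compr₂ (psi2 ψ)) := by
    rw [hpair]
    exact (TensorProduct.dualDistribEquiv ℂ B B).injective.comp
      (TensorProduct.map_injective_of_flat_flat _ _ (mul_flip_compr₂_injective hψ)
        (mul_flip_compr₂_injective hψ))
  exact hinj (LinearMap.ext fun ζ => by simpa using h ζ)

lemma eq_of_forall_psiOne_star_mul_eq {B : Type*} [Ring B] [StarRing B] [Algebra ℂ B]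
    [StarModule ℂ B] [Module.Finite ℂ B] [Module.Free ℂ B]
    {ψ : B →ₗ[ℂ] ℂ} (hψ : ∀ x : B, ψ (star x * x) = 0 → x = 0) {η₁ η₂ : B ⊗[ℂ] B}
    (h : ∀ ξ, psiOne ψ (star ξ * η₁) = psiOne ψ (star ξ * η₂)) : η₁ = η₂ := by
  refine sub_eq_zero.mp (eq_zero_of_forall_psi2_mul_eq_zero hψ fun ζ => ?_)
  rw [mul_sub, map_sub, ← psi_psiOne, ← psi_psiOne, ← star_star ζ, h, sub_self]

lemma injective_of_bip_eq_star_mul {B : Type*} [Ring B] [StarRing B] [Algebra ℂ B]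
    [StarModule ℂ B] [Module.Finite ℂ B] [Module.Free ℂ B]
    {ψ : B →ₗ[ℂ] ℂ} (hψ : ∀ x : B, ψ (star x * x) = 0 → x = 0) {Φ : B →ₗ[ℂ] B ⊗[ℂ] B}
    (hΦ : ∀ a b, bip ψ (Φ a) (Φ b) = star a * b) : Function.Injective Φ := by
  refine (injective_iff_map_eq_zero Φ).mpr fun a ha => hψ a ?_
  rw [← hΦ, ha, bip_eq, star_zero, zero_mul, map_zero, map_zero]

section EdgeEmbedding

variable {B : Type*} [Ring B] [Algebra ℂ B]

def edgeEmbedding (mstar : B →ₗ[ℂ] B ⊗[ℂ] B) (δ : ℝ) (α : B →ₗ[ℂ] B) : B →ₗ[ℂ] B ⊗[ℂ] B :=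
  (δ : ℂ) • (LinearMap.mulLeft ℂ (edgeInd mstar δ α) ∘ₗ
    (Algebra.TensorProduct.includeRight : B →ₐ[ℂ] B ⊗[ℂ] B).toLinearMap)

variable {mstar : B →ₗ[ℂ] B ⊗[ℂ] B} {δ : ℝ} {α : B →ₗ[ℂ] B}

lemma edgeEmbedding_apply (b : B) :
    edgeEmbedding mstar δ α b = (δ : ℂ) • (edgeInd mstar δ α * ((1 : B) ⊗ₜ[ℂ] b)) := by
  simp [edgeEmbedding]

lemma edgeEmbedding_inv_smul_one (hδ : (δ : ℂ) ≠ 0) :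
    edgeEmbedding mstar δ α ((δ : ℂ)⁻¹ • 1) = edgeInd mstar δ α := by
  rw [map_smul, edgeEmbedding_apply, smul_smul, inv_mul_cancel₀ hδ, one_smul,
    ← Algebra.TensorProduct.one_def, mul_one]

end EdgeEmbedding

section EdgeCorrespondence

variable {B : Type*} [Ring B] [StarRing B] [Algebra ℂ B] [StarModule ℂ B]
  {ψ : B →ₗ[ℂ] ℂ} {mstar : B →ₗ[ℂ] B ⊗[ℂ] B}

lemma psi2_star_mul_mstar (hadj : IsAdjointMul ψ mstar) (ζ : B ⊗[ℂ] B) (x : B) :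
    psi2 ψ (star ζ * mstar x) = ψ (star (mulMap B ζ) * x) := by
  induction ζ using TensorProduct.induction_on with
  | zero => simp
  | tmul y z => exact hadj x y z
  | add u v hu hv => simp only [star_add, add_mul, map_add, hu, hv]

lemma psiOne_star_mul_mstar (hψ : ∀ x : B, ψ (star x * x) = 0 → x = 0)
    (hadj : IsAdjointMul ψ mstar) (ξ : B ⊗[ℂ] B) (x : B) :
    psiOne ψ (star ξ * mstar x) = star (mulMap B ξ) * x := by
  have hpair : ∀ c : B, ψ (star c * psiOne ψ (star ξ * mstar x)) =
      ψ (star c * (star (mulMap B ξ) * x)) := fun c => by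
    have hξ : ((1 : B) ⊗ₜ[ℂ] star c) * star ξ = star (ξ * ((1 : B) ⊗ₜ[ℂ] c)) := by simp
    rw [← psiOne_one_tmul_mul, psi_psiOne, ← mul_assoc, hξ, psi2_star_mul_mstar hadj,
      mulMap_mul_one_tmul, star_mul, mul_assoc]
  refine sub_eq_zero.mp (hψ _ ?_)
  rw [mul_sub, map_sub, hpair, sub_self]

variable {δ : ℝ} {α : B →ₗ[ℂ] B}

lemma psiOne_star_edgeInd_mul_self (hψ : ∀ x : B, ψ (star x * x) = 0 → x = 0)
    (hadj : IsAdjointMul ψ mstar) (hdelta : IsDeltaForm mstar δ) (hδ : (δ : ℂ) ≠ 0)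
    (hmul : ∀ x y, α (x * y) = α x * α y) (hone : α 1 = 1)
    (hstar : ∀ x, α (star x) = star (α x)) :
    psiOne ψ (star (edgeInd mstar δ α) * edgeInd mstar δ α) = ((δ : ℂ) ^ 2)⁻¹ • (1 : B) := by
  have hδ2 : star ((δ : ℂ) ^ 2) = (δ : ℂ) ^ 2 := by
    rw [star_pow, Complex.star_def, Complex.conj_ofReal]
  have hself : psiOne ψ (star (mstar 1) * mstar 1) = ((δ : ℂ) ^ 2) • (1 : B) := by
    rw [psiOne_star_mul_mstar hψ hadj, hdelta, mul_one, star_smul, star_one, hδ2]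
  rw [edgeInd, star_smul, star_inv₀, hδ2, star_lTensor hstar, smul_mul_smul_comm,
    ← lTensor_mul hmul, map_smul, psiOne_lTensor, hself, map_smul, hone, smul_smul]
  congr 1
  field_simp

variable [Module.Finite ℂ B] [Module.Free ℂ B]

lemma mstar_eq_tmul_one_mul (hψ : ∀ x : B, ψ (star x * x) = 0 → x = 0)
    (hadj : IsAdjointMul ψ mstar) (x : B) :
    mstar x = (x ⊗ₜ[ℂ] (1 : B)) * mstar 1 := by
  refine eq_of_forall_psiOne_star_mul_eq hψ fun ξ => ?_
  have hξ : star ξ * (x ⊗ₜ[ℂ] (1 : B)) = star ((star x ⊗ₜ[ℂ] (1 : B)) * ξ) := by simp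
  rw [psiOne_star_mul_mstar hψ hadj, ← mul_assoc, hξ, psiOne_star_mul_mstar hψ hadj,
    mulMap_tmul_one_mul, star_mul, star_star, mul_one]

lemma mstar_eq_mul_one_tmul (hψ : ∀ x : B, ψ (star x * x) = 0 → x = 0)
    (hadj : IsAdjointMul ψ mstar) (x : B) :
    mstar x = mstar 1 * ((1 : B) ⊗ₜ[ℂ] x) := by
  refine eq_of_forall_psiOne_star_mul_eq hψ fun ξ => ?_
  rw [psiOne_star_mul_mstar hψ hadj, ← mul_assoc, psiOne_mul_one_tmul,
    psiOne_star_mul_mstar hψ hadj, mul_one]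

lemma tmul_one_mul_edgeInd (hψ : ∀ x : B, ψ (star x * x) = 0 → x = 0)
    (hadj : IsAdjointMul ψ mstar) (hmul : ∀ x y, α (x * y) = α x * α y) (hone : α 1 = 1)
    (x : B) :
    (x ⊗ₜ[ℂ] (1 : B)) * edgeInd mstar δ α = edgeInd mstar δ α * ((1 : B) ⊗ₜ[ℂ] α x) := by
  have hx : x ⊗ₜ[ℂ] (1 : B) = LinearMap.lTensor B α (x ⊗ₜ[ℂ] (1 : B)) := by simp [hone]
  have hαx : (1 : B) ⊗ₜ[ℂ] α x = LinearMap.lTensor B α ((1 : B) ⊗ₜ[ℂ] x) := by simp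
  rw [edgeInd, mul_smul_comm, smul_mul_assoc, hx, hαx, ← lTensor_mul hmul, ← lTensor_mul hmul,
    ← mstar_eq_tmul_one_mul hψ hadj, ← mstar_eq_mul_one_tmul hψ hadj]

lemma edgeEmbedding_mul (hψ : ∀ x : B, ψ (star x * x) = 0 → x = 0)
    (hadj : IsAdjointMul ψ mstar) (hmul : ∀ x y, α (x * y) = α x * α y) (hone : α 1 = 1)
    (x η y : B) :
    edgeEmbedding mstar δ α (α x * η * y) =
      (x ⊗ₜ[ℂ] (1 : B)) * edgeEmbedding mstar δ α η * ((1 : B) ⊗ₜ[ℂ] y) := by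
  have hsplit : (1 : B) ⊗ₜ[ℂ] (α x * η * y) =
      ((1 : B) ⊗ₜ[ℂ] α x) * ((1 : B) ⊗ₜ[ℂ] η) * ((1 : B) ⊗ₜ[ℂ] y) := by
    simp [Algebra.TensorProduct.tmul_mul_tmul]
  rw [edgeEmbedding_apply, edgeEmbedding_apply, mul_smul_comm, smul_mul_assoc, hsplit,
    ← mul_assoc, ← mul_assoc, ← tmul_one_mul_edgeInd hψ hadj hmul hone, mul_assoc _ _ (_ ⊗ₜ[ℂ] η)]

lemma range_edgeEmbedding (hψ : ∀ x : B, ψ (star x * x) = 0 → x = 0)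
    (hadj : IsAdjointMul ψ mstar) (hδ : (δ : ℂ) ≠ 0) (hmul : ∀ x y, α (x * y) = α x * α y)
    (hone : α 1 = 1) :
    LinearMap.range (edgeEmbedding mstar δ α) = EGspan mstar δ α := by
  apply le_antisymm
  · rintro _ ⟨b, rfl⟩
    rw [edgeEmbedding_apply, ← one_mul (edgeInd mstar δ α), Algebra.TensorProduct.one_def]
    exact Submodule.smul_mem _ _ (Submodule.subset_span ⟨1, b, rfl⟩)
  · rw [EGspan, Submodule.span_le]
    rintro _ ⟨x, y, rfl⟩
    rw [← edgeEmbedding_inv_smul_one hδ, ← edgeEmbedding_mul hψ hadj hmul hone]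
    exact LinearMap.mem_range_self _ _

lemma bip_edgeEmbedding (hψ : ∀ x : B, ψ (star x * x) = 0 → x = 0)
    (hadj : IsAdjointMul ψ mstar) (hdelta : IsDeltaForm mstar δ) (hδ : (δ : ℂ) ≠ 0)
    (hmul : ∀ x y, α (x * y) = α x * α y) (hone : α 1 = 1)
    (hstar : ∀ x, α (star x) = star (α x)) (a b : B) :
    bip ψ (edgeEmbedding mstar δ α a) (edgeEmbedding mstar δ α b) = star a * b := by
  rw [bip_eq, edgeEmbedding_apply, edgeEmbedding_apply, star_smul, Complex.star_def,
    Complex.conj_ofReal, smul_mul_smul_comm, star_mul, TensorProduct.star_tmul, star_one,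
    mul_assoc, ← mul_assoc (star _), map_smul, psiOne_one_tmul_mul, psiOne_mul_one_tmul,
    psiOne_star_edgeInd_mul_self hψ hadj hdelta hδ hmul hone hstar, smul_mul_assoc, one_mul,
    mul_smul_comm, smul_smul, ← sq, mul_inv_cancel₀ (pow_ne_zero 2 hδ), one_smul]

end EdgeCorrespondence

theorem stmt_19_general {B : Type*} [Ring B] [StarRing B] [Algebra ℂ B] [StarModule ℂ B]
    [Module.Finite ℂ B] [Module.Free ℂ B]
    (ψ : B →ₗ[ℂ] ℂ) (hψ : IsState ψ)
    (mstar : B →ₗ[ℂ] B ⊗[ℂ] B) (hadj : IsAdjointMul ψ mstar)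
    (δ : ℝ) (hδ : 0 < δ) (hdelta : IsDeltaForm mstar δ)
    (α : B →ₗ[ℂ] B) (hmul : ∀ x y, α (x * y) = α x * α y) (hone : α 1 = 1)
    (hstar : ∀ x, α (star x) = star (α x)) :
    ∃ Φ : B →ₗ[ℂ] B ⊗[ℂ] B,
      Function.Injective Φ ∧
      LinearMap.range Φ = EGspan mstar δ α ∧
      Φ (((δ : ℂ))⁻¹ • 1) = edgeInd mstar δ α ∧
      (∀ x η y : B, Φ (α x * η * y) = (x ⊗ₜ[ℂ] (1 : B)) * Φ η * ((1 : B) ⊗ₜ[ℂ] y)) ∧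
      (∀ a b : B, bip ψ (Φ a) (Φ b) = star a * b) := by
  have hfaith := hψ.2.2
  have hδ0 : (δ : ℂ) ≠ 0 := Complex.ofReal_ne_zero.mpr hδ.ne'
  have hbip := bip_edgeEmbedding hfaith hadj hdelta hδ0 hmul hone hstar
  exact ⟨edgeEmbedding mstar δ α, injective_of_bip_eq_star_mul hfaith hbip,
    range_edgeEmbedding hfaith hadj hδ0 hmul hone, edgeEmbedding_inv_smul_one hδ0,
    edgeEmbedding_mul hfaith hadj hmul hone, hbip⟩

/-- For a `*`-automorphism `α`, the quantum edge correspondence `E_α` is isomorphic to `B_α`: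
there is an injective linear map `Φ : B → B ⊗ B` with range `E_α`, sending `(1/δ)·1` to `ε_α`,
intertwining the `B_α`-bimodule actions (`x · η · y = α(x) η y` on `B_α`) and preserving the
`B`-valued inner products (`⟨a,b⟩ = a* b` on `B_α`). -/
theorem stmt_19 {B : Type*} [Ring B] [StarRing B] [Algebra ℂ B] [StarModule ℂ B]
    [Module.Finite ℂ B] [Module.Free ℂ B]
    (ψ : B →ₗ[ℂ] ℂ) (hψ : IsState ψ)
    (mstar : B →ₗ[ℂ] B ⊗[ℂ] B) (hadj : IsAdjointMul ψ mstar)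
    (δ : ℝ) (hδ : 0 < δ) (hdelta : IsDeltaForm mstar δ)
    (α : B →ₗ[ℂ] B) (hmul : ∀ x y, α (x * y) = α x * α y) (hone : α 1 = 1)
    (hstar : ∀ x, α (star x) = star (α x)) (hbij : Function.Bijective α) :
    ∃ Φ : B →ₗ[ℂ] B ⊗[ℂ] B,
      Function.Injective Φ ∧
      LinearMap.range Φ = EGspan mstar δ α ∧
      Φ (((δ : ℂ))⁻¹ • 1) = edgeInd mstar δ α ∧
      (∀ x η y : B, Φ (α x * η * y) = (x ⊗ₜ[ℂ] (1 : B)) * Φ η * ((1 : B) ⊗ₜ[ℂ] y)) ∧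
      (∀ a b : B, bip ψ (Φ a) (Φ b) = star a * b) :=
  stmt_19_general ψ hψ mstar hadj δ hδ hdelta α hmul hone hstar
end
end
end
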